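/- If u is a real-valued harmonic function on 𝔻 with values in (-1,1) and ω is an analytic function on 𝔻 with u = Re ω, then for all z ∈ 𝔻: (π/2)·|ω'(z)|/cos(π·u(z)/2) ≤ 2/(1−|z|²). Equivalently, |∇u(z)| ≤ (4/π)·cos(π u(z)/2)/(1−|z|²). -/

import Mathlib

open Real Set Metric

/-! `w ↦ tan (π w / 4)` maps the strip `|Re w| < 1` into the unit disc, and the identity
`1 - |tan ζ|² = cos (2 Re ζ) / |cos ζ|²` shows that it pulls the hyperbolic density
`2 / (1 - |ζ|²)` of the disc back to `ρ₀`. The Schwarz–Pick inequality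
`|g'(z)| (1 - |z|²) ≤ 1 - |g(z)|²`, applied to `g = tan (π ω / 4)`, therefore bounds `|ω'|`,
and `|∇ Re ω| ≤ |ω'|` gives the bound for `∇u`. -/

open ComplexConjugate

noncomputable def mobius (c z : ℂ) : ℂ := (z - c) / (1 - conj c * z)

theorem normSq_one_sub_conj_mul_sub_normSq_sub (c z : ℂ) :
    Complex.normSq (1 - conj c * z) - Complex.normSq (z - c) =
      (1 - Complex.normSq c) * (1 - Complex.normSq z) := by
  simp only [Complex.normSq_apply, Complex.sub_re, Complex.sub_im, Complex.mul_re,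
    Complex.mul_im, Complex.one_re, Complex.one_im, Complex.conj_re, Complex.conj_im]
  ring

theorem one_sub_conj_mul_ne_zero {c z : ℂ} (hc : ‖c‖ < 1) (hz : ‖z‖ ≤ 1) :
    1 - conj c * z ≠ 0 := by
  have h : ‖conj c * z‖ < 1 := by
    rw [norm_mul, Complex.norm_conj]
    exact mul_lt_one_of_nonneg_of_lt_one_left (norm_nonneg c) hc hz
  rw [sub_ne_zero]
  rintro h1
  rw [← h1, norm_one] at h
  exact h.false

theorem norm_mobius_lt_one {c z : ℂ} (hc : ‖c‖ < 1) (hz : ‖z‖ < 1) : ‖mobius c z‖ < 1 := by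
  have hden := one_sub_conj_mul_ne_zero hc hz.le
  rw [mobius, norm_div, div_lt_one (norm_pos_iff.mpr hden)]
  refine pow_lt_pow_iff_left₀ (norm_nonneg _) (norm_nonneg _) two_ne_zero |>.mp ?_
  have hc' : Complex.normSq c < 1 := by
    rw [Complex.normSq_eq_norm_sq]; nlinarith [norm_nonneg c]
  have hz' : Complex.normSq z < 1 := by
    rw [Complex.normSq_eq_norm_sq]; nlinarith [norm_nonneg z]
  simp only [Complex.sq_norm]
  nlinarith [normSq_one_sub_conj_mul_sub_normSq_sub c z]

theorem mapsTo_mobius {c : ℂ} (hc : ‖c‖ < 1) : MapsTo (mobius c) (ball 0 1) (ball 0 1) :=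
  fun z hz => by
    rw [mem_ball_zero_iff] at hz ⊢
    exact norm_mobius_lt_one hc hz

theorem hasDerivAt_mobius {c z : ℂ} (h : 1 - conj c * z ≠ 0) :
    HasDerivAt (mobius c) ((1 - Complex.normSq c) / (1 - conj c * z) ^ 2) z := by
  refine (((hasDerivAt_id' z).sub_const c).div
    (((hasDerivAt_id' z).const_mul (conj c)).const_sub 1) h).congr_deriv ?_
  rw [← Complex.mul_conj]
  ring

theorem differentiableOn_mobius {c : ℂ} (hc : ‖c‖ < 1) :
    DifferentiableOn ℂ (mobius c) (ball 0 1) :=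
  fun _ hz => (hasDerivAt_mobius (one_sub_conj_mul_ne_zero hc
    (mem_ball_zero_iff.mp hz).le)).differentiableAt.differentiableWithinAt

@[simp]
theorem mobius_self (c : ℂ) : mobius c c = 0 := by simp [mobius]

@[simp]
theorem mobius_neg_zero (c : ℂ) : mobius (-c) 0 = c := by simp [mobius]

theorem hasDerivAt_mobius_neg_zero (c : ℂ) :
    HasDerivAt (mobius (-c)) (1 - Complex.normSq c) 0 := by
  simpa using hasDerivAt_mobius (c := -c) (z := 0) (by simp)

theorem hasDerivAt_mobius_self {c : ℂ} (hc : ‖c‖ < 1) :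
    HasDerivAt (mobius c) (1 - (Complex.normSq c : ℂ))⁻¹ c := by
  have h := one_sub_conj_mul_ne_zero hc hc.le
  convert hasDerivAt_mobius h using 1
  rw [mul_comm, Complex.mul_conj] at h ⊢
  field_simp

theorem norm_one_sub_normSq {c : ℂ} (hc : ‖c‖ < 1) :
    ‖(1 - Complex.normSq c : ℂ)‖ = 1 - ‖c‖ ^ 2 := by
  rw [Complex.normSq_eq_norm_sq]
  norm_cast
  rw [Real.norm_of_nonneg]
  nlinarith [norm_nonneg c]

theorem norm_deriv_mul_one_sub_sq_le_of_mapsTo_ball {g : ℂ → ℂ}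
    (hg : DifferentiableOn ℂ g (ball 0 1)) (hmaps : MapsTo g (ball 0 1) (ball 0 1))
    {a : ℂ} (ha : a ∈ ball 0 1) :
    ‖deriv g a‖ * (1 - ‖a‖ ^ 2) ≤ 1 - ‖g a‖ ^ 2 := by
  have ha' : ‖a‖ < 1 := mem_ball_zero_iff.mp ha
  have hb : ‖g a‖ < 1 := mem_ball_zero_iff.mp (hmaps ha)
  have hna : ‖-a‖ < 1 := by rwa [norm_neg]
  set h := mobius (g a) ∘ g ∘ mobius (-a) with h_def
  have h_maps : MapsTo h (ball 0 1) (ball 0 1) :=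
    (mapsTo_mobius hb).comp (hmaps.comp (mapsTo_mobius hna))
  have h_diff : DifferentiableOn ℂ h (ball 0 1) :=
    (differentiableOn_mobius hb).comp (hg.comp (differentiableOn_mobius hna) (mapsTo_mobius hna))
      (hmaps.comp (mapsTo_mobius hna))
  have h_deriv : HasDerivAt h
      ((1 - (Complex.normSq (g a) : ℂ))⁻¹ * (deriv g a * (1 - Complex.normSq a))) 0 := by
    have hg_deriv : HasDerivAt g (deriv g a) (mobius (-a) 0) := by
      rw [mobius_neg_zero]
      exact (hg.differentiableAt (isOpen_ball.mem_nhds ha)).hasDerivAt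
    exact (hasDerivAt_mobius_self hb).comp_of_eq 0
      (hg_deriv.comp 0 (hasDerivAt_mobius_neg_zero a)) (by simp)
  have hle : ‖deriv h 0‖ ≤ 1 := by
    simpa using Complex.norm_deriv_le_div_of_mapsTo_ball h_diff
      (by simpa [h_def] using h_maps.mono_right ball_subset_closedBall) one_pos
  rwa [h_deriv.deriv, norm_mul, norm_mul, norm_inv, norm_one_sub_normSq ha',
    norm_one_sub_normSq hb, inv_mul_le_iff₀ (by nlinarith [norm_nonneg (g a)]), mul_one] at hle

theorem normSq_cos_sub_normSq_sin (ζ : ℂ) :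
    Complex.normSq (Complex.cos ζ) - Complex.normSq (Complex.sin ζ) = Real.cos (2 * ζ.re) := by
  apply Complex.ofReal_injective
  rw [Complex.ofReal_sub, ← Complex.mul_conj, ← Complex.mul_conj, ← Complex.cos_conj,
    ← Complex.sin_conj, ← Complex.cos_add, Complex.add_conj, Complex.ofReal_cos]

theorem cos_ne_zero_of_cos_two_mul_re_pos {ζ : ℂ} (h : 0 < Real.cos (2 * ζ.re)) :
    Complex.cos ζ ≠ 0 := by
  rw [← Complex.normSq_pos]
  linarith [normSq_cos_sub_normSq_sin ζ, Complex.normSq_nonneg (Complex.sin ζ)]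

theorem one_sub_norm_tan_sq {ζ : ℂ} (h : Complex.cos ζ ≠ 0) :
    1 - ‖Complex.tan ζ‖ ^ 2 = Real.cos (2 * ζ.re) / Complex.normSq (Complex.cos ζ) := by
  rw [Complex.tan_eq_sin_div_cos, norm_div, div_pow, Complex.sq_norm, Complex.sq_norm,
    ← normSq_cos_sub_normSq_sin, sub_div, div_self (Complex.normSq_pos.mpr h).ne']

theorem norm_tan_lt_one_of_cos_two_mul_re_pos {ζ : ℂ} (h : 0 < Real.cos (2 * ζ.re)) :
    ‖Complex.tan ζ‖ < 1 := by
  have hcos := cos_ne_zero_of_cos_two_mul_re_pos h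
  have : 0 < 1 - ‖Complex.tan ζ‖ ^ 2 := by
    rw [one_sub_norm_tan_sq hcos]; exact div_pos h (Complex.normSq_pos.mpr hcos)
  nlinarith [norm_nonneg (Complex.tan ζ)]

theorem cos_pi_mul_div_two_pos {x : ℝ} (hx : |x| < 1) : 0 < Real.cos (π * x / 2) := by
  obtain ⟨hx₁, hx₂⟩ := abs_lt.mp hx
  apply Real.cos_pos_of_mem_Ioo
  constructor <;> nlinarith [Real.pi_pos]

theorem pi_div_four_mul_norm_deriv_mul_one_sub_sq_le_cos {ω : ℂ → ℂ}
    (hω : DifferentiableOn ℂ ω (ball 0 1)) (hstrip : MapsTo ω (ball 0 1) {w | |w.re| < 1})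
    {z : ℂ} (hz : z ∈ ball 0 1) :
    π / 4 * ‖deriv ω z‖ * (1 - ‖z‖ ^ 2) ≤ Real.cos (π * (ω z).re / 2) := by
  set ζ : ℂ → ℂ := fun x => ((π / 4 : ℝ) : ℂ) * ω x with hζ
  have hζ_re : ∀ x, 2 * (ζ x).re = π * (ω x).re / 2 := fun x => by
    rw [hζ, Complex.re_ofReal_mul]; ring
  have hpos : ∀ x ∈ ball (0 : ℂ) 1, 0 < Real.cos (2 * (ζ x).re) := fun x hx => by
    rw [hζ_re]; exact cos_pi_mul_div_two_pos (hstrip hx)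
  have hcos : ∀ x ∈ ball (0 : ℂ) 1, Complex.cos (ζ x) ≠ 0 := fun x hx =>
    cos_ne_zero_of_cos_two_mul_re_pos (hpos x hx)
  have hζ_deriv : ∀ x ∈ ball (0 : ℂ) 1, HasDerivAt ζ (((π / 4 : ℝ) : ℂ) * deriv ω x) x :=
    fun x hx => (hω.differentiableAt (isOpen_ball.mem_nhds hx)).hasDerivAt.const_mul _
  have htan_deriv : ∀ x ∈ ball (0 : ℂ) 1, HasDerivAt (Complex.tan ∘ ζ)
      (1 / Complex.cos (ζ x) ^ 2 * (((π / 4 : ℝ) : ℂ) * deriv ω x)) x := fun x hx =>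
    (Complex.hasDerivAt_tan (hcos x hx)).comp x (hζ_deriv x hx)
  have hSP := norm_deriv_mul_one_sub_sq_le_of_mapsTo_ball (g := Complex.tan ∘ ζ)
    (fun x hx => (htan_deriv x hx).differentiableAt.differentiableWithinAt)
    (fun x hx => mem_ball_zero_iff.mpr (norm_tan_lt_one_of_cos_two_mul_re_pos (hpos x hx)))
    hz
  have hN := Complex.normSq_pos.mpr (hcos z hz)
  rw [(htan_deriv z hz).deriv, Function.comp_apply, one_sub_norm_tan_sq (hcos z hz), hζ_re,
    norm_mul, norm_mul, norm_div, norm_one, norm_pow, Complex.sq_norm, Complex.norm_real,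
    Real.norm_of_nonneg (by positivity), le_div_iff₀ hN] at hSP
  calc π / 4 * ‖deriv ω z‖ * (1 - ‖z‖ ^ 2)
      = 1 / Complex.normSq (Complex.cos (ζ z)) * (π / 4 * ‖deriv ω z‖) * (1 - ‖z‖ ^ 2) *
          Complex.normSq (Complex.cos (ζ z)) := by field_simp
    _ ≤ Real.cos (π * (ω z).re / 2) := hSP

theorem norm_fderiv_re_le {f : ℂ → ℂ} {f' z : ℂ} (hf : HasDerivAt f f' z) :
    ‖fderiv ℝ (fun x => (f x).re) z‖ ≤ ‖f'‖ := by
  have h : HasFDerivAt (fun x => (f x).re) (Complex.reCLM.comp (f' • 1)) z :=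
    Complex.reCLM.hasFDerivAt.comp z hf.complexToReal_fderiv
  rw [h.fderiv]
  refine ContinuousLinearMap.opNorm_le_bound _ (norm_nonneg _) fun v => ?_
  simpa using Complex.abs_re_le_norm (f' * v)

/-- Schwarz–Pick type inequality for real harmonic functions: if `u = Re ω` with
`ω` holomorphic on `𝔻` and `u` has values in `(-1,1)`, then for all `z ∈ 𝔻`,
`(π/2)·|ω'(z)|/cos (π u(z)/2) ≤ 2/(1-|z|²)`, equivalently
`|∇u(z)| ≤ (4/π)·cos (π u(z)/2)/(1-|z|²)`. -/
theorem harmonic_schwarz_pick (u : ℂ → ℝ) (ω : ℂ → ℂ)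
    (hω : DifferentiableOn ℂ ω (Metric.ball 0 1))
    (hre : ∀ z ∈ Metric.ball (0 : ℂ) 1, u z = (ω z).re)
    (hmaps : Set.MapsTo u (Metric.ball 0 1) (Set.Ioo (-1 : ℝ) 1)) :
    ∀ z ∈ Metric.ball (0 : ℂ) 1,
      (Real.pi / 2) * ‖deriv ω z‖ / Real.cos (Real.pi * u z / 2) ≤ 2 / (1 - ‖z‖ ^ 2) ∧
      ‖fderiv ℝ u z‖ ≤ (4 / Real.pi) * Real.cos (Real.pi * u z / 2) / (1 - ‖z‖ ^ 2) := by
  intro z hz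
  have hstrip : MapsTo ω (ball 0 1) {w | |w.re| < 1} := fun x hx => by
    simpa [← hre x hx, abs_lt] using hmaps hx
  have hSP := pi_div_four_mul_norm_deriv_mul_one_sub_sq_le_cos hω hstrip hz
  rw [← hre z hz] at hSP
  have hcos : 0 < Real.cos (π * u z / 2) := by
    rw [hre z hz]; exact cos_pi_mul_div_two_pos (hstrip hz)
  have hdisk : 0 < 1 - ‖z‖ ^ 2 := by
    have := mem_ball_zero_iff.mp hz; nlinarith [norm_nonneg z]
  have hu : ‖fderiv ℝ u z‖ ≤ ‖deriv ω z‖ := by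
    rw [(Filter.eventuallyEq_of_mem (isOpen_ball.mem_nhds hz) hre).fderiv_eq]
    exact norm_fderiv_re_le (hω.differentiableAt (isOpen_ball.mem_nhds hz)).hasDerivAt
  constructor
  · rw [div_le_div_iff₀ hcos hdisk]; linarith
  · refine hu.trans ?_
    rw [le_div_iff₀ hdisk]
    calc ‖deriv ω z‖ * (1 - ‖z‖ ^ 2)
        = 4 / π * (π / 4 * ‖deriv ω z‖ * (1 - ‖z‖ ^ 2)) := by field_simp
      _ ≤ 4 / π * Real.cos (π * u z / 2) := by gcongr
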